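/- Let m >= 2 and fix 1 <= i < j <= m. For a positive integer q, let M_D(q) be the set of tuples (x_1,...,x_m) in Z_q^m such that x_i + x_j = 0, x_s != x_t for all s != t, x_s != x_t + 1 for all s < t, and x_s != -x_t and x_s != -x_t + 1 for all s != t with {s,t} != {i,j}; and let M_B(q+2) be the set of tuples (y_1,...,y_m) in Z_{q+2}^m such that y_i + y_j = 0, y_s != 0 and y_s != 1 for all s, y_s != y_t for all s != t, y_s != y_t + 1 for all s < t, and y_s != -y_t and y_s != -y_t + 1 for all s != t with {s,t} != {i,j}. Then for every sufficiently large positive integer q, |M_D(q)| = |M_B(q+2)|. -/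

import Mathlib

/-!
Represent `t : ZMod q` by the integer `rep t ∈ [1, q]` and send it to `rep t + 1 : ZMod (q + 2)`;
this is a bijection of `ZMod q` onto the complement of `{0, 1}` in `ZMod (q + 2)`. All integers
that occur are so small that each of `x s + x t = 0`, `x s + x t = 1`, `x s = x t`,
`x s = x t + 1` becomes the same equation between representatives in both rings, with two
exceptions in `ZMod q`: `0 + 0 = 0`, excluded because the coordinates are distinct, and the
wrap-around `1 = 0 + 1`, excluded because then `x s + x t = 1`.
-/

theorem ZMod.intCast_eq_zero_iff_of_abs_lt {n : ℕ} {x : ℤ} (hx : |x| < n) :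
    (x : ZMod n) = 0 ↔ x = 0 := by
  rw [ZMod.intCast_zmod_eq_zero_iff_dvd]
  exact ⟨fun h => Int.eq_zero_of_abs_lt_dvd h hx, fun h => h ▸ dvd_zero _⟩

namespace ShiRestriction

section Embed

variable {q : ℕ} [NeZero q] {a b : ZMod q}

def rep (t : ZMod q) : ℤ := (t - 1).val + 1

omit [NeZero q] in
theorem one_le_rep (t : ZMod q) : 1 ≤ rep t := by
  unfold rep; omega

theorem rep_le (t : ZMod q) : rep t ≤ q := by
  have := (t - 1).val_lt
  unfold rep; omega

@[simp]
theorem intCast_rep (t : ZMod q) : ((rep t : ℤ) : ZMod q) = t := by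
  simp [rep]

theorem rep_intCast {A : ℤ} (h₁ : 1 ≤ A) (h₂ : A ≤ q) : rep (A : ZMod q) = A := by
  have := one_le_rep (A : ZMod q); have := rep_le (A : ZMod q)
  have h : ((rep (A : ZMod q) - A : ℤ) : ZMod q) = 0 := by push_cast; simp
  rw [ZMod.intCast_eq_zero_iff_of_abs_lt (abs_lt.2 ⟨by omega, by omega⟩)] at h
  omega

theorem rep_injective : Function.Injective (rep : ZMod q → ℤ) := fun a b h => by
  rw [← intCast_rep a, h, intCast_rep]

def embed (t : ZMod q) : ZMod (q + 2) := ((rep t + 1 : ℤ) : ZMod (q + 2))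

omit [NeZero q] in
theorem intCast_sub_eq_intCast_add_two (x : ℤ) :
    ((x - q : ℤ) : ZMod (q + 2)) = ((x + 2 : ℤ) : ZMod (q + 2)) := by
  have := ZMod.natCast_self (q + 2)
  push_cast at this ⊢
  linear_combination -this

theorem embed_injective : Function.Injective (embed : ZMod q → ZMod (q + 2)) := fun a b h => by
  have := rep_le a; have := rep_le b; have := one_le_rep a; have := one_le_rep b
  have h' : ((rep a - rep b : ℤ) : ZMod (q + 2)) = 0 := by
    unfold embed at h; push_cast at h ⊢; linear_combination h
  rw [ZMod.intCast_eq_zero_iff_of_abs_lt (abs_lt.2 ⟨by omega, by omega⟩)] at h'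
  exact rep_injective (by omega)

theorem embed_ne_zero (t : ZMod q) : embed t ≠ 0 := by
  have := rep_le t; have := one_le_rep t
  rw [embed, Ne, ZMod.intCast_eq_zero_iff_of_abs_lt (abs_lt.2 ⟨by omega, by omega⟩)]
  omega

theorem embed_ne_one (t : ZMod q) : embed t ≠ 1 := by
  have := rep_le t; have := one_le_rep t
  have h : embed t - 1 = ((rep t : ℤ) : ZMod (q + 2)) := by simp [embed]
  rw [Ne, ← sub_eq_zero, h, ZMod.intCast_eq_zero_iff_of_abs_lt (abs_lt.2 ⟨by omega, by omega⟩)]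
  omega

theorem exists_embed_eq {u : ZMod (q + 2)} (h₀ : u ≠ 0) (h₁ : u ≠ 1) :
    ∃ t : ZMod q, embed t = u := by
  set A : ℤ := ((u - 1).val : ℤ)
  have hu : u = ((A + 1 : ℤ) : ZMod (q + 2)) := by simp [A]
  have : A < q + 2 := by have := (u - 1).val_lt; omega
  have : A ≠ 0 := by rintro hA; simp [hA] at hu; exact h₁ hu
  have : A ≠ q + 1 := by
    rintro hA; apply h₀
    rw [hu, hA, ZMod.intCast_zmod_eq_zero_iff_dvd]
    exact ⟨1, by push_cast; ring⟩
  refine ⟨A, ?_⟩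
  rw [embed, rep_intCast (by omega) (by omega), hu]

theorem embed_add_embed_eq_zero_iff (hab : a ≠ b) : embed a + embed b = 0 ↔ a + b = 0 := by
  have := rep_le a; have := rep_le b; have := one_le_rep a; have := one_le_rep b
  have hAB : rep a ≠ rep b := rep_injective.ne hab
  have hD : a + b = ((rep a + rep b - q : ℤ) : ZMod q) := by simp
  have hB : embed a + embed b = ((rep a + rep b - q : ℤ) : ZMod (q + 2)) := by
    rw [intCast_sub_eq_intCast_add_two, embed, embed]; push_cast; ring
  rw [hD, hB, ZMod.intCast_eq_zero_iff_of_abs_lt (abs_lt.2 ⟨by omega, by omega⟩),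
    ZMod.intCast_eq_zero_iff_of_abs_lt (abs_lt.2 ⟨by omega, by omega⟩)]

theorem embed_add_embed_eq_one_iff : embed a + embed b = 1 ↔ a + b = 1 := by
  have := rep_le a; have := rep_le b; have := one_le_rep a; have := one_le_rep b
  have hD : a + b - 1 = ((rep a + rep b - 1 - q : ℤ) : ZMod q) := by simp
  have hB : embed a + embed b - 1 = ((rep a + rep b - 1 - q : ℤ) : ZMod (q + 2)) := by
    rw [intCast_sub_eq_intCast_add_two, embed, embed]; push_cast; ring
  rw [← sub_eq_zero, hB, ← sub_eq_zero (a := a + b), hD,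
    ZMod.intCast_eq_zero_iff_of_abs_lt (abs_lt.2 ⟨by omega, by omega⟩),
    ZMod.intCast_eq_zero_iff_of_abs_lt (abs_lt.2 ⟨by omega, by omega⟩)]

theorem eq_add_one_of_embed_eq_embed_add_one (h : embed a = embed b + 1) : a = b + 1 := by
  have := rep_le a; have := rep_le b; have := one_le_rep a; have := one_le_rep b
  have hB : embed a - (embed b + 1) = ((rep a - rep b - 1 : ℤ) : ZMod (q + 2)) := by
    rw [embed, embed]; push_cast; ring
  rw [← sub_eq_zero, hB, ZMod.intCast_eq_zero_iff_of_abs_lt (abs_lt.2 ⟨by omega, by omega⟩)] at h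
  rw [← intCast_rep a, ← intCast_rep b, show rep a = rep b + 1 by omega]
  push_cast; ring

theorem embed_eq_embed_add_one_or_add_eq_one (h : a = b + 1) :
    embed a = embed b + 1 ∨ a + b = 1 := by
  have := rep_le a; have := rep_le b; have := one_le_rep a; have := one_le_rep b
  have hD : a - (b + 1) = ((rep a - rep b - 1 : ℤ) : ZMod q) := by simp; ring
  rw [← sub_eq_zero, hD, ZMod.intCast_zmod_eq_zero_iff_dvd] at h
  rcases eq_or_ne (rep a - rep b - 1) (-q) with hwrap | hwrap
  · right
    obtain ⟨ha, hb⟩ : rep a = 1 ∧ rep b = q := by omega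
    rw [← intCast_rep a, ← intCast_rep b, ha, hb]
    simp
  · left
    have := Int.eq_zero_of_abs_lt_dvd h (abs_lt.2 ⟨by omega, by omega⟩)
    rw [embed, embed, show rep a = rep b + 1 by omega]
    push_cast; ring

end Embed

section Points

variable {ι : Type*} [Preorder ι] {i j : ι}

def shiDPoints (i j : ι) (R : Type*) [Ring R] : Set (ι → R) :=
  {x | x i + x j = 0 ∧
    (∀ s t, s ≠ t → x s ≠ x t) ∧
    (∀ s t, s < t → x s ≠ x t + 1) ∧
    (∀ s t, s ≠ t → ¬((s = i ∧ t = j) ∨ (s = j ∧ t = i)) → x s ≠ -x t ∧ x s ≠ -x t + 1)}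

def shiBPoints (i j : ι) (R : Type*) [Ring R] : Set (ι → R) :=
  {y | y i + y j = 0 ∧
    (∀ s, y s ≠ 0 ∧ y s ≠ 1) ∧
    (∀ s t, s ≠ t → y s ≠ y t) ∧
    (∀ s t, s < t → y s ≠ y t + 1) ∧
    (∀ s t, s ≠ t → ¬((s = i ∧ t = j) ∨ (s = j ∧ t = i)) → y s ≠ -y t ∧ y s ≠ -y t + 1)}

theorem ne_neg_and_ne_neg_add_one_iff {R : Type*} [AddCommGroup R] [One R] {a b : R} :
    (a ≠ -b ∧ a ≠ -b + 1) ↔ (a + b ≠ 0 ∧ a + b ≠ 1) := by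
  rw [Ne, Ne, Ne, Ne, eq_neg_iff_add_eq_zero, eq_neg_add_iff_add_eq, add_comm b]

variable {q : ℕ} [NeZero q]

theorem embed_comp_mem_shiBPoints_iff {x : ι → ZMod q} (hij : i ≠ j) :
    embed ∘ x ∈ shiBPoints i j (ZMod (q + 2)) ↔ x ∈ shiDPoints i j (ZMod q) := by
  have hpm : ∀ s t, x s ≠ x t → ((embed (x s) ≠ -embed (x t) ∧ embed (x s) ≠ -embed (x t) + 1) ↔
      (x s ≠ -x t ∧ x s ≠ -x t + 1)) := fun s t hst => by
    simp only [ne_neg_and_ne_neg_add_one_iff, ne_eq, embed_add_embed_eq_zero_iff hst,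
      embed_add_embed_eq_one_iff]
  simp only [shiBPoints, shiDPoints, Set.mem_ofPred_eq, Function.comp_apply, embed_ne_zero,
    embed_ne_one, ne_eq, not_false_eq_true, and_self, implies_true, true_and,
    embed_injective.eq_iff]
  constructor
  · rintro ⟨h₀, hdist, hsucc, hsum⟩
    refine ⟨(embed_add_embed_eq_zero_iff (hdist _ _ hij)).1 h₀, hdist, fun s t hst h => ?_,
      fun s t hst hp => (hpm s t (hdist s t hst)).1 (hsum s t hst hp)⟩
    rcases embed_eq_embed_add_one_or_add_eq_one h with h | h
    · exact hsucc s t hst h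
    -- the wrap-around `x s = 1`, `x t = 0` clashes with `x i + x j = 0` or with `x s + x t ≠ 1`
    · rw [← embed_add_embed_eq_one_iff] at h
      by_cases hp : (s = i ∧ t = j) ∨ (s = j ∧ t = i)
      · have : Fact (1 < q + 2) := ⟨by omega⟩
        rcases hp with ⟨rfl, rfl⟩ | ⟨rfl, rfl⟩
        · exact zero_ne_one (h₀.symm.trans h)
        · exact zero_ne_one (h₀.symm.trans ((add_comm _ _).trans h))
      · exact (hsum s t hst.ne hp).2 (by rw [← h]; abel)
  · rintro ⟨h₀, hdist, hsucc, hsum⟩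
    exact ⟨(embed_add_embed_eq_zero_iff (hdist _ _ hij)).2 h₀, hdist,
      fun s t hst h => hsucc s t hst (eq_add_one_of_embed_eq_embed_add_one h),
      fun s t hst hp => (hpm s t (hdist s t hst)).2 (hsum s t hst hp)⟩

theorem image_embed_comp_shiDPoints (hij : i ≠ j) :
    (embed ∘ ·) '' shiDPoints i j (ZMod q) = shiBPoints i j (ZMod (q + 2)) := by
  ext y
  constructor
  · rintro ⟨x, hx, rfl⟩
    exact (embed_comp_mem_shiBPoints_iff hij).2 hx
  · intro hy
    choose x hx using fun s => exists_embed_eq (hy.2.1 s).1 (hy.2.1 s).2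
    obtain rfl : embed ∘ x = y := funext hx
    exact ⟨x, (embed_comp_mem_shiBPoints_iff hij).1 hy, rfl⟩

theorem ncard_shiDPoints_eq_ncard_shiBPoints (hij : i ≠ j) :
    (shiDPoints i j (ZMod q)).ncard = (shiBPoints i j (ZMod (q + 2))).ncard := by
  rw [← image_embed_comp_shiDPoints hij,
    Set.ncard_image_of_injective _ embed_injective.comp_left]

end Points

end ShiRestriction

open ShiRestriction in
/-- For all sufficiently large `q`, the number of points over `ZMod q` of the complement
of the restriction of the Shi arrangement of type D to `x_i + x_j = 0` equals the number
of points over `ZMod (q+2)` of the complement of the restriction of the Shi arrangement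
of type B to `x_i + x_j = 0` (indices `1 ≤ i < j ≤ m`, 1-indexed). -/
theorem shi_typeD_typeB_restriction_xi_add_xj_eq_zero_card_eq (m i j : ℕ)
    (hi1 : 1 ≤ i) (hij : i < j) (hjm : j ≤ m) :
    ∃ N : ℕ, 0 < N ∧ ∀ q : ℕ, N ≤ q →
      {x : Fin m → ZMod q |
          x ⟨i - 1, by omega⟩ + x ⟨j - 1, by omega⟩ = 0 ∧
          (∀ s t : Fin m, s ≠ t → x s ≠ x t) ∧
          (∀ s t : Fin m, s < t → x s ≠ x t + 1) ∧
          (∀ s t : Fin m, s ≠ t →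
            ¬((s = ⟨i - 1, by omega⟩ ∧ t = ⟨j - 1, by omega⟩) ∨
              (s = ⟨j - 1, by omega⟩ ∧ t = ⟨i - 1, by omega⟩)) →
            x s ≠ -x t ∧ x s ≠ -x t + 1)}.ncard =
        {y : Fin m → ZMod (q + 2) |
          y ⟨i - 1, by omega⟩ + y ⟨j - 1, by omega⟩ = 0 ∧
          (∀ s : Fin m, y s ≠ 0 ∧ y s ≠ 1) ∧
          (∀ s t : Fin m, s ≠ t → y s ≠ y t) ∧
          (∀ s t : Fin m, s < t → y s ≠ y t + 1) ∧
          (∀ s t : Fin m, s ≠ t →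
            ¬((s = ⟨i - 1, by omega⟩ ∧ t = ⟨j - 1, by omega⟩) ∨
              (s = ⟨j - 1, by omega⟩ ∧ t = ⟨i - 1, by omega⟩)) →
            y s ≠ -y t ∧ y s ≠ -y t + 1)}.ncard := by
  refine ⟨1, one_pos, fun q hq => ?_⟩
  have : NeZero q := ⟨by omega⟩
  exact ncard_shiDPoints_eq_ncard_shiBPoints (Fin.ne_of_val_ne (by simp only; omega))
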